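/- Let 𝕎 be the space of (a.e.-equivalence classes of) Lebesgue-integrable functions w : ℝ → ℝ vanishing a.e. on (−∞,0); for λ > 0 and H ∈ ℝ let φ_{λ,H} : 𝕎 → 𝕎 be the map (φ_{λ,H} w)(t) := λ^{H−1} w(t/λ). Let γ > 0 and γ/2 < H ≤ 1 + γ/2, set H₁ := H − γ/2 ∈ (0,1], and let ν be a σ-finite Borel measure on 𝕎 which is (γ,H)-scaling and satisfies both: (a) for every x > 0, ∫_{ℝ×𝕎} ( |∫_0^x w(t−u) dt| ∧ |∫_0^x w(t−u) dt|² ) du ν(dw) < ∞, and (b) C_ν² := ∫_{ℝ×𝕎} ( ∫_0^1 w(t−u) dt )² du ν(dw) < ∞. Then for every x > 0 and θ ∈ ℝ, lim_{λ→0+} ∫_{ℝ×𝕎} Ψ( θ λ^{−H₁} ∫_0^{λx} w(t−u) dt ) du ν(dw) = −(θ²/2) · C_ν² · x^{2H₁}, where Ψ(z) := e^{iz} − 1 − iz. -/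

import Mathlib

/-! The map `(u, w) ↦ (λu, φ_{λ,H} w)` multiplies `du ν(dw)` by `λ^γ`, and
`∫_0^{λx} (φ_{λ,H} w)(t - λu) dt = λ^H ∫_0^x w(t - u) dt`. Hence the integral at scale `λ` equals
`λ^{-γ} ∫ Ψ(λ^{γ/2} θ Y) du ν(dw)` with `Y(u,w) = ∫_0^x w(t - u) dt`. Since
`λ^{-γ} Ψ(λ^{γ/2} a) → -a²/2` and `|Ψ(z)| ≤ 2z²`, dominated convergence gives the limit
`-(θ²/2) ∫ Y²`, and the same rescaling with `λ = x` shows `∫ Y² = x^{2H₁} C_ν²`. -/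

open MeasureTheory Filter Set
open scoped ENNReal Topology

noncomputable section

/-- Borel σ-algebra on `L¹(ℝ)`. -/
instance : MeasurableSpace (Lp ℝ 1 (volume : Measure ℝ)) := borel _

/-- `𝕎`: the space of (a.e.-equivalence classes of) Lebesgue-integrable functions
`ℝ → ℝ` vanishing a.e. on `(-∞, 0)`, with the Borel σ-algebra inherited from `L¹(ℝ)`. -/
abbrev WW : Type :=
  {w : Lp ℝ 1 (volume : Measure ℝ) // ∀ᵐ t ∂(volume : Measure ℝ), t < 0 → w t = 0}

/-- The scaling map `φ_{λ,H} w (t) = λ^{H-1} w(t/λ)` on `𝕎`. -/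
noncomputable def phi (lam H : ℝ) (w : WW) : WW := by
  classical
  exact if h : MemLp (fun t => lam ^ (H - 1) * (w.1 : ℝ → ℝ) (t / lam)) 1 (volume : Measure ℝ) ∧
      ∀ᵐ t ∂(volume : Measure ℝ), t < 0 → lam ^ (H - 1) * (w.1 : ℝ → ℝ) (t / lam) = 0
  then ⟨h.1.toLp _, by
    filter_upwards [h.1.coeFn_toLp, h.2] with t h1 h2 ht
    rw [h1]; exact h2 ht⟩
  else ⟨0, by
    filter_upwards [Lp.coeFn_zero ℝ 1 (volume : Measure ℝ)] with t h1 _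
    simp [h1]⟩

/-- `ν` is a `(γ,H)`-scaling measure on `𝕎`:
`λ^{1+γ} ν(φ_{λ,H}(A)) = ν(A)` for every `λ > 0` and Borel `A`. -/
def ScalingMeasure (ν : Measure WW) (γ H : ℝ) : Prop :=
  ∀ lam : ℝ, 0 < lam → ∀ A : Set WW, MeasurableSet A →
    ENNReal.ofReal (lam ^ (1 + γ)) * ν (phi lam H '' A) = ν A

/-- `𝒲(w) = ∫_0^∞ w(t) dt`. -/
noncomputable def Wcal (w : WW) : ℝ := ∫ t in Set.Ioi (0:ℝ), (w.1 : ℝ → ℝ) t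

/-- `Ψ(z) = e^{iz} - 1 - iz`. -/
noncomputable def Psi (z : ℝ) : ℂ := Complex.exp ((z:ℂ) * Complex.I) - 1 - (z:ℂ) * Complex.I

end

instance : BorelSpace (Lp ℝ 1 (volume : Measure ℝ)) := ⟨rfl⟩

lemma Real.quasiMeasurePreserving_div_const {lam : ℝ} (hlam : lam ≠ 0) :
    Measure.QuasiMeasurePreserving (fun t : ℝ => t / lam) volume volume := by
  have h := Measure.quasiMeasurePreserving_smul (volume : Measure ℝ) (inv_ne_zero hlam)
  simp only [smul_eq_mul] at h
  simpa only [div_eq_inv_mul] using h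

section Phi

variable {lam : ℝ} (H : ℝ)

lemma coeFn_phi (hlam : 0 < lam) (w : WW) :
    ((phi lam H w).1 : ℝ → ℝ)
      =ᵐ[(volume : Measure ℝ)] fun t => lam ^ (H - 1) * (w.1 : ℝ → ℝ) (t / lam) := by
  have hmem : MemLp (fun t => lam ^ (H - 1) * (w.1 : ℝ → ℝ) (t / lam)) 1 volume :=
    memLp_one_iff_integrable.2 (((L1.integrable_coeFn w.1).comp_div hlam.ne').const_mul _)
  have hvanish : ∀ᵐ t ∂volume, t < 0 → lam ^ (H - 1) * (w.1 : ℝ → ℝ) (t / lam) = 0 := by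
    filter_upwards [(Real.quasiMeasurePreserving_div_const hlam.ne').ae w.2] with t ht htneg
    rw [ht (div_neg_of_neg_of_pos htneg hlam), mul_zero]
  rw [phi, dif_pos ⟨hmem, hvanish⟩]
  exact hmem.coeFn_toLp

lemma dist_phi (hlam : 0 < lam) (w w' : WW) :
    dist (phi lam H w) (phi lam H w') = lam ^ H * dist w w' := by
  have hcoe : (fun t => ‖((phi lam H w).1 - (phi lam H w').1 : Lp ℝ 1 volume) t‖)
      =ᵐ[(volume : Measure ℝ)]
        fun t => lam ^ (H - 1) * ‖(w.1 - w'.1 : Lp ℝ 1 volume) (t / lam)‖ := by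
    filter_upwards [Lp.coeFn_sub (phi lam H w).1 (phi lam H w').1, coeFn_phi H hlam w,
      coeFn_phi H hlam w',
      (Real.quasiMeasurePreserving_div_const hlam.ne').ae (Lp.coeFn_sub w.1 w'.1)]
      with t h h₁ h₂ h₃
    rw [h, Pi.sub_apply, h₁, h₂, h₃, Pi.sub_apply, ← mul_sub, norm_mul,
      Real.norm_of_nonneg (by positivity)]
  rw [Subtype.dist_eq, Subtype.dist_eq, dist_eq_norm, dist_eq_norm, L1.norm_eq_integral_norm,
    L1.norm_eq_integral_norm, integral_congr_ae hcoe, integral_const_mul,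
    Measure.integral_comp_div (fun t => ‖(w.1 - w'.1 : Lp ℝ 1 volume) t‖), abs_of_pos hlam,
    smul_eq_mul, ← mul_assoc, ← Real.rpow_add_one hlam.ne', sub_add_cancel]

lemma continuous_phi (hlam : 0 < lam) : Continuous (phi lam H) :=
  (LipschitzWith.of_dist_le_mul (K := (lam ^ H).toNNReal) fun w w' => by
    rw [dist_phi H hlam, Real.coe_toNNReal _ (by positivity)]).continuous

lemma phi_phi_inv (hlam : 0 < lam) (w : WW) : phi lam H (phi lam⁻¹ H w) = w := by
  refine Subtype.ext (Lp.ext ?_)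
  filter_upwards [coeFn_phi H hlam (phi lam⁻¹ H w),
    (Real.quasiMeasurePreserving_div_const hlam.ne').ae (coeFn_phi H (inv_pos.2 hlam) w)]
    with t h₁ h₂
  rw [h₁, h₂, div_inv_eq_mul, div_mul_cancel₀ _ hlam.ne', ← mul_assoc,
    ← Real.mul_rpow hlam.le (inv_pos.2 hlam).le, mul_inv_cancel₀ hlam.ne', Real.one_rpow, one_mul]

noncomputable def phiEquiv (hlam : 0 < lam) : WW ≃ᵐ WW where
  toFun := phi lam H
  invFun := phi lam⁻¹ H
  left_inv w := by simpa only [inv_inv] using phi_phi_inv H (inv_pos.2 hlam) w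
  right_inv := phi_phi_inv H hlam
  measurable_toFun := (continuous_phi H hlam).measurable
  measurable_invFun := (continuous_phi H (inv_pos.2 hlam)).measurable

end Phi

section Scaling

variable {lam γ H : ℝ} {ν : Measure WW}

lemma ScalingMeasure.map_phiEquiv (hscal : ScalingMeasure ν γ H) (hlam : 0 < lam) :
    ν.map (phiEquiv H hlam) = ENNReal.ofReal (lam ^ (1 + γ)) • ν := by
  ext B hB
  rw [MeasurableEquiv.map_apply, Measure.smul_apply, smul_eq_mul,
    ← hscal lam hlam _ ((phiEquiv H hlam).measurable hB)]
  congr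
  exact Set.image_preimage_eq B (phiEquiv H hlam).surjective

noncomputable def scaleEquiv (hlam : 0 < lam) (H : ℝ) : ℝ × WW ≃ᵐ ℝ × WW :=
  (MeasurableEquiv.mulLeft₀ lam hlam.ne').prodCongr (phiEquiv H hlam)

variable [SigmaFinite ν]

lemma ScalingMeasure.map_scaleEquiv (hscal : ScalingMeasure ν γ H) (hlam : 0 < lam) :
    (volume.prod ν).map (scaleEquiv hlam H) = ENNReal.ofReal (lam ^ γ) • volume.prod ν := by
  have hvol : (volume : Measure ℝ).map (MeasurableEquiv.mulLeft₀ lam hlam.ne')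
      = ENNReal.ofReal lam⁻¹ • volume := by
    rw [MeasurableEquiv.coe_mulLeft₀, Real.map_volume_mul_left hlam.ne',
      abs_of_pos (inv_pos.2 hlam)]
  rw [show ⇑(scaleEquiv hlam H) = Prod.map (MeasurableEquiv.mulLeft₀ lam hlam.ne') (phiEquiv H hlam)
      from rfl, ← Measure.map_prod_map _ _
    (MeasurableEquiv.measurable _) (MeasurableEquiv.measurable _), hvol,
    hscal.map_phiEquiv hlam, Measure.prod_smul_left, Measure.prod_smul_right, smul_smul,
    ← ENNReal.ofReal_mul (by positivity), Real.rpow_add hlam, Real.rpow_one,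
    ← mul_assoc, inv_mul_cancel₀ hlam.ne', one_mul]

lemma ScalingMeasure.integral_comp_scaleEquiv {E : Type*} [NormedAddCommGroup E]
    [NormedSpace ℝ E] (hscal : ScalingMeasure ν γ H) (hlam : 0 < lam) (f : ℝ × WW → E) :
    ∫ p, f (scaleEquiv hlam H p) ∂(volume.prod ν) = lam ^ γ • ∫ p, f p ∂(volume.prod ν) := by
  rw [← integral_map_equiv, hscal.map_scaleEquiv hlam, integral_smul_measure,
    ENNReal.toReal_ofReal (by positivity)]

lemma ScalingMeasure.integrable_comp_scaleEquiv_iff {E : Type*} [NormedAddCommGroup E]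
    (hscal : ScalingMeasure ν γ H) (hlam : 0 < lam) {f : ℝ × WW → E} :
    Integrable (f ∘ scaleEquiv hlam H) (volume.prod ν) ↔ Integrable f (volume.prod ν) := by
  rw [← integrable_map_equiv, hscal.map_scaleEquiv hlam,
    integrable_smul_measure (by positivity) ENNReal.ofReal_ne_top]

end Scaling

section ShiftIntegral

noncomputable def shiftIntegral (c : ℝ) (p : ℝ × WW) : ℝ :=
  ∫ t in (0:ℝ)..c, (p.2.1 : ℝ → ℝ) (t - p.1)

lemma shiftIntegral_scaleEquiv {lam : ℝ} (hlam : 0 < lam) (H c : ℝ) (p : ℝ × WW) :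
    shiftIntegral (lam * c) (scaleEquiv hlam H p) = lam ^ H * shiftIntegral c p := by
  have hcoe : ∀ᵐ t ∂(volume : Measure ℝ), ((phi lam H p.2).1 : ℝ → ℝ) (t - lam * p.1)
      = lam ^ (H - 1) * (p.2.1 : ℝ → ℝ) (t / lam - p.1) := by
    filter_upwards [(measurePreserving_sub_right volume (lam * p.1)).quasiMeasurePreserving.ae
      (coeFn_phi H hlam p.2)] with t ht
    rw [ht, sub_div, mul_div_cancel_left₀ _ hlam.ne']
  change ∫ t in (0:ℝ)..lam * c, ((phi lam H p.2).1 : ℝ → ℝ) (t - lam * p.1) = _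
  rw [intervalIntegral.integral_congr_ae (hcoe.mono fun t ht _ => ht),
    intervalIntegral.integral_const_mul,
    intervalIntegral.integral_comp_div (fun s => (p.2.1 : ℝ → ℝ) (s - p.1)) hlam.ne',
    zero_div, mul_div_cancel_left₀ _ hlam.ne', smul_eq_mul, ← mul_assoc,
    ← Real.rpow_add_one hlam.ne', sub_add_cancel, shiftIntegral]

lemma lipschitzWith_intervalIntegral (a b : ℝ) :
    LipschitzWith 1 fun w : WW => ∫ t in a..b, (w.1 : ℝ → ℝ) t := by
  refine LipschitzWith.of_dist_le_mul fun w w' => ?_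
  have hint : ∀ v : WW, IntervalIntegrable (v.1 : ℝ → ℝ) volume a b :=
    fun v => (L1.integrable_coeFn v.1).intervalIntegrable
  rw [NNReal.coe_one, one_mul, dist_eq_norm, ← intervalIntegral.integral_sub (hint w) (hint w'),
    Subtype.dist_eq, dist_eq_norm, L1.norm_eq_integral_norm]
  calc ‖∫ t in a..b, ((w.1 : ℝ → ℝ) t - (w'.1 : ℝ → ℝ) t)‖
      ≤ ∫ t in Set.uIoc a b, ‖(w.1 : ℝ → ℝ) t - (w'.1 : ℝ → ℝ) t‖ :=
        intervalIntegral.norm_integral_le_integral_norm_uIoc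
    _ ≤ ∫ t, ‖(w.1 : ℝ → ℝ) t - (w'.1 : ℝ → ℝ) t‖ :=
        setIntegral_le_integral ((L1.integrable_coeFn w.1).sub (L1.integrable_coeFn w'.1)).norm
          (Eventually.of_forall fun _ => norm_nonneg _)
    _ = ∫ t, ‖(w.1 - w'.1 : Lp ℝ 1 volume) t‖ :=
        integral_congr_ae <| (Lp.coeFn_sub w.1 w'.1).mono fun t ht => by
          simp only [ht, Pi.sub_apply]

lemma shiftIntegral_eq_sub (c : ℝ) (p : ℝ × WW) :
    shiftIntegral c p
      = (∫ t in (0:ℝ)..c - p.1, (p.2.1 : ℝ → ℝ) t) - ∫ t in (0:ℝ)..-p.1, (p.2.1 : ℝ → ℝ) t := by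
  have hint : ∀ a b : ℝ, IntervalIntegrable (p.2.1 : ℝ → ℝ) volume a b :=
    fun a b => (L1.integrable_coeFn p.2.1).intervalIntegrable
  rw [shiftIntegral, intervalIntegral.integral_comp_sub_right, zero_sub, eq_sub_iff_add_eq,
    add_comm, intervalIntegral.integral_add_adjacent_intervals (hint _ _) (hint _ _)]

lemma stronglyMeasurable_shiftIntegral (c : ℝ) : StronglyMeasurable (shiftIntegral c) := by
  refine stronglyMeasurable_uncurry_of_continuous_of_stronglyMeasurable
    (u := fun u w => shiftIntegral c (u, w)) (fun w => ?_) (fun u => ?_)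
  · have hprimitive : Continuous fun a => ∫ t in (0:ℝ)..a, (w.1 : ℝ → ℝ) t :=
      (L1.integrable_coeFn w.1).continuous_primitive 0
    simp only [shiftIntegral_eq_sub]
    fun_prop
  · simp only [shiftIntegral_eq_sub]
    exact ((lipschitzWith_intervalIntegral _ _).continuous.sub
      (lipschitzWith_intervalIntegral _ _).continuous).stronglyMeasurable

end ShiftIntegral

section Psi

lemma continuous_Psi : Continuous Psi := by
  unfold Psi
  fun_prop

lemma Psi_eq (z : ℝ) : Psi z = Complex.exp (Complex.I * z) - 1 - Complex.I * z := by
  rw [Psi, mul_comm]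

lemma norm_Psi_le (z : ℝ) : ‖Psi z‖ ≤ 2 * z ^ 2 := by
  have hIz : ‖Complex.I * z‖ = |z| := by simp
  rcases le_or_gt |z| 1 with hz | hz
  · calc ‖Psi z‖ ≤ ‖Complex.I * z‖ ^ 2 :=
          (Psi_eq z).symm ▸ Complex.norm_exp_sub_one_sub_id_le (hIz.trans_le hz)
      _ ≤ 2 * z ^ 2 := by rw [hIz, sq_abs]; nlinarith [sq_nonneg z]
  · calc ‖Psi z‖ ≤ ‖Complex.exp (Complex.I * z) - 1‖ + ‖Complex.I * z‖ :=
          (Psi_eq z).symm ▸ norm_sub_le _ _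
      _ ≤ |z| + |z| := by
          rw [hIz]; gcongr; exact Real.norm_exp_I_mul_ofReal_sub_one_le
      _ ≤ 2 * z ^ 2 := by nlinarith [sq_abs z]

lemma Psi_add_sq_div_two_isBigO :
    (fun z : ℝ => Psi z + (z : ℂ) ^ 2 / 2) =O[𝓝 0] fun z => z ^ 3 := by
  have hI : Tendsto (fun z : ℝ => Complex.I * z) (𝓝 0) (𝓝 0) := by
    simpa using (Complex.continuous_ofReal.const_mul Complex.I).tendsto 0
  refine (((Complex.exp_sub_sum_range_isBigO_pow 3).comp_tendsto hI).congr_left fun z => ?_).trans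
    (Asymptotics.isBigO_of_le _ fun z => by simp)
  simp only [Function.comp_apply, Finset.sum_range_succ, Finset.sum_range_zero, Psi_eq, mul_pow,
    Complex.I_sq]
  norm_num
  ring

end Psi

lemma Real.rpow_neg_mul_rpow_div_two_sq {lam : ℝ} (hlam : 0 < lam) (γ : ℝ) :
    lam ^ (-γ) * (lam ^ (γ / 2)) ^ 2 = 1 := by
  rw [← Real.rpow_natCast, ← Real.rpow_mul hlam.le, ← Real.rpow_add hlam]
  norm_num

section Limit

variable {γ : ℝ}

lemma tendsto_rpow_neg_smul_Psi (hγ : 0 < γ) (a : ℝ) :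
    Tendsto (fun lam : ℝ => lam ^ (-γ) • Psi (a * lam ^ (γ / 2))) (𝓝[>] 0)
      (𝓝 ((-(a ^ 2) / 2 : ℝ) : ℂ)) := by
  have hz : Tendsto (fun lam : ℝ => lam ^ (γ / 2)) (𝓝[>] 0) (𝓝 0) := by
    simpa [Real.zero_rpow (half_pos hγ).ne'] using
      (Real.continuousAt_rpow_const 0 _ (Or.inr (half_pos hγ).le)).tendsto.mono_left
        nhdsWithin_le_nhds
  have hunit : ∀ᶠ lam in 𝓝[>] (0:ℝ), lam ^ (-γ) * (lam ^ (γ / 2)) ^ 2 = 1 := by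
    filter_upwards [self_mem_nhdsWithin] with lam hlam
    exact Real.rpow_neg_mul_rpow_div_two_sq hlam γ
  have hremainder : Tendsto (fun lam : ℝ => lam ^ (-γ) •
      (Psi (a * lam ^ (γ / 2)) + ((a * lam ^ (γ / 2) : ℝ) : ℂ) ^ 2 / 2)) (𝓝[>] 0) (𝓝 0) := by
    refine ((Asymptotics.isBigO_refl _ _).smul
      (Psi_add_sq_div_two_isBigO.comp_tendsto ?_)).trans_tendsto ?_
    · simpa using hz.const_mul a
    · have hcube : Tendsto (fun lam : ℝ => a ^ 3 * lam ^ (γ / 2)) (𝓝[>] 0) (𝓝 0) := by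
        simpa using hz.const_mul (a ^ 3)
      refine hcube.congr' (hunit.mono fun lam h => ?_)
      simp only [Function.comp_apply, smul_eq_mul]
      linear_combination (-(a ^ 3 * lam ^ (γ / 2))) * h
  have hlimit := hremainder.add_const ((-(a ^ 2) / 2 : ℝ) : ℂ)
  rw [zero_add] at hlimit
  refine hlimit.congr' ?_
  filter_upwards [hunit] with lam h
  rw [smul_add, Complex.real_smul, Complex.real_smul]
  have h' : ((lam ^ (-γ) : ℝ) : ℂ) * ((lam ^ (γ / 2) : ℝ) : ℂ) ^ 2 = 1 := by exact_mod_cast h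
  push_cast
  linear_combination (a ^ 2 / 2 : ℂ) * h'

lemma tendsto_integral_rpow_neg_smul_Psi {α : Type*} [MeasurableSpace α] {μ : Measure α}
    (hγ : 0 < γ) {Y : α → ℝ} (hY : AEStronglyMeasurable Y μ)
    (hY2 : Integrable (fun a => Y a ^ 2) μ) :
    Tendsto (fun lam : ℝ => ∫ a, lam ^ (-γ) • Psi (Y a * lam ^ (γ / 2)) ∂μ) (𝓝[>] 0)
      (𝓝 ((-(∫ a, Y a ^ 2 ∂μ) / 2 : ℝ) : ℂ)) := by
  have hlimit : ((-(∫ a, Y a ^ 2 ∂μ) / 2 : ℝ) : ℂ) = ∫ a, ((-(Y a ^ 2) / 2 : ℝ) : ℂ) ∂μ := by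
    rw [integral_complex_ofReal, integral_div, integral_neg]
  rw [hlimit]
  refine tendsto_integral_filter_of_dominated_convergence (fun a => 2 * Y a ^ 2)
    (Eventually.of_forall fun lam => ?_) ?_ (hY2.const_mul 2)
    (Eventually.of_forall fun a => tendsto_rpow_neg_smul_Psi hγ (Y a))
  · exact (continuous_Psi.comp_aestronglyMeasurable (hY.mul_const _)).const_smul (lam ^ (-γ))
  · filter_upwards [self_mem_nhdsWithin] with lam (hlam : 0 < lam)
    refine Eventually.of_forall fun a => ?_
    calc ‖lam ^ (-γ) • Psi (Y a * lam ^ (γ / 2))‖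
        ≤ lam ^ (-γ) * (2 * (Y a * lam ^ (γ / 2)) ^ 2) := by
          rw [norm_smul, Real.norm_of_nonneg (by positivity)]
          gcongr
          exact norm_Psi_le _
      _ = 2 * Y a ^ 2 := by
          linear_combination (2 * Y a ^ 2) * Real.rpow_neg_mul_rpow_div_two_sq hlam γ

end Limit

section Rescaling

variable {γ H : ℝ} {ν : Measure WW} [SigmaFinite ν]

lemma shiftIntegral_scaleEquiv_one {x : ℝ} (hx : 0 < x) (H : ℝ) (p : ℝ × WW) :
    shiftIntegral x (scaleEquiv hx H p) = x ^ H * shiftIntegral 1 p := by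
  simpa using shiftIntegral_scaleEquiv hx H 1 p

lemma ScalingMeasure.integral_shiftIntegral_sq (hscal : ScalingMeasure ν γ H) {x : ℝ}
    (hx : 0 < x) :
    ∫ p, shiftIntegral x p ^ 2 ∂(volume.prod ν)
      = x ^ (2 * (H - γ / 2)) * ∫ p, shiftIntegral 1 p ^ 2 ∂(volume.prod ν) := by
  have h := hscal.integral_comp_scaleEquiv hx fun p => shiftIntegral x p ^ 2
  simp only [shiftIntegral_scaleEquiv_one, mul_pow, integral_const_mul, smul_eq_mul] at h
  have hexp : x ^ (-γ) * (x ^ H) ^ 2 = x ^ (2 * (H - γ / 2)) := by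
    rw [← Real.rpow_natCast, ← Real.rpow_mul hx.le, ← Real.rpow_add hx]
    ring_nf
  rw [← hexp, mul_assoc, h, ← mul_assoc, ← Real.rpow_add hx, neg_add_cancel, Real.rpow_zero,
    one_mul]

lemma ScalingMeasure.integrable_shiftIntegral_sq (hscal : ScalingMeasure ν γ H) {x : ℝ}
    (hx : 0 < x) (h1 : Integrable (fun p => shiftIntegral 1 p ^ 2) (volume.prod ν)) :
    Integrable (fun p => shiftIntegral x p ^ 2) (volume.prod ν) := by
  refine (hscal.integrable_comp_scaleEquiv_iff hx).1 ?_
  simpa only [Function.comp_def, shiftIntegral_scaleEquiv_one, mul_pow] using h1.const_mul _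

lemma ScalingMeasure.integral_Psi_shiftIntegral (hscal : ScalingMeasure ν γ H) {lam : ℝ}
    (hlam : 0 < lam) (x θ : ℝ) :
    ∫ p, Psi (θ * lam ^ (-(H - γ / 2)) * shiftIntegral (lam * x) p) ∂(volume.prod ν)
      = ∫ p, lam ^ (-γ) • Psi (θ * shiftIntegral x p * lam ^ (γ / 2)) ∂(volume.prod ν) := by
  have hexp : lam ^ (-(H - γ / 2)) * lam ^ H = lam ^ (γ / 2) := by
    rw [← Real.rpow_add hlam]
    ring_nf
  have h := hscal.integral_comp_scaleEquiv hlam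
    fun p => Psi (θ * lam ^ (-(H - γ / 2)) * shiftIntegral (lam * x) p)
  have hpoint (p : ℝ × WW) :
      θ * lam ^ (-(H - γ / 2)) * shiftIntegral (lam * x) (scaleEquiv hlam H p)
        = θ * shiftIntegral x p * lam ^ (γ / 2) := by
    rw [shiftIntegral_scaleEquiv, ← hexp]
    ring
  simp only [hpoint] at h
  rw [integral_smul, h, smul_smul, ← Real.rpow_add hlam, neg_add_cancel, Real.rpow_zero, one_smul]

end Rescaling

theorem stmt_15_general (γ H : ℝ) (hγ : 0 < γ)
    (ν : Measure WW) [SigmaFinite ν] (hscal : ScalingMeasure ν γ H)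
    (hmom2 : Integrable
      (fun p : ℝ × WW => (∫ t in (0:ℝ)..1, (p.2.1 : ℝ → ℝ) (t - p.1)) ^ 2)
      ((volume : Measure ℝ).prod ν))
    (x θ : ℝ) (hx : 0 < x) :
    Tendsto (fun lam : ℝ =>
        ∫ p : ℝ × WW,
          Psi (θ * lam ^ (-(H - γ / 2)) *
            ∫ t in (0:ℝ)..(lam * x), (p.2.1 : ℝ → ℝ) (t - p.1))
          ∂((volume : Measure ℝ).prod ν))
      (nhdsWithin 0 (Set.Ioi 0))
      (nhds (((-(θ ^ 2 / 2) *
        (∫ p : ℝ × WW, (∫ t in (0:ℝ)..1, (p.2.1 : ℝ → ℝ) (t - p.1)) ^ 2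
          ∂((volume : Measure ℝ).prod ν)) * x ^ (2 * (H - γ / 2)) : ℝ) : ℂ))) := by
  have hY2 : Integrable (fun p => (θ * shiftIntegral x p) ^ 2) (volume.prod ν) := by
    simpa only [mul_pow] using (hscal.integrable_shiftIntegral_sq hx hmom2).const_mul (θ ^ 2)
  have hlimit := tendsto_integral_rpow_neg_smul_Psi hγ
    ((stronglyMeasurable_shiftIntegral x).aestronglyMeasurable.const_mul θ) hY2
  simp only [mul_pow, integral_const_mul, hscal.integral_shiftIntegral_sq hx] at hlimit
  rw [show -(θ ^ 2 * (x ^ (2 * (H - γ / 2)) * ∫ p, shiftIntegral 1 p ^ 2 ∂(volume.prod ν))) / 2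
      = -(θ ^ 2 / 2) * (∫ p, shiftIntegral 1 p ^ 2 ∂(volume.prod ν)) * x ^ (2 * (H - γ / 2))
      by ring] at hlimit
  exact hlimit.congr' (eventually_mem_nhdsWithin.mono fun lam hlam =>
    (hscal.integral_Psi_shiftIntegral hlam x θ).symm)

/-- local asymptotic self-similarity of `J_ν(·,1)`, characteristic-function
form. Let `γ > 0`, `γ/2 < H ≤ 1 + γ/2`, `H₁ = H - γ/2`, and let `ν` be a `(γ,H)`-scaling
σ-finite measure on `𝕎` satisfying the basic integrability condition (a) and the second
moment condition (b). Then for every `x > 0` and `θ ∈ ℝ`,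
`∫_{ℝ×𝕎} Ψ(θ λ^{-H₁} ∫_0^{λx} w(t-u) dt) du ν(dw) → -(θ²/2) C_ν² x^{2H₁}` as `λ → 0+`. -/
theorem stmt_15 (γ H : ℝ) (hγ : 0 < γ) (hH1 : γ / 2 < H) (hH2 : H ≤ 1 + γ / 2)
    (ν : Measure WW) [SigmaFinite ν] (hscal : ScalingMeasure ν γ H)
    (hcru : ∀ x : ℝ, 0 < x →
      (∫⁻ p : ℝ × WW,
        ENNReal.ofReal (min |∫ t in (0:ℝ)..x, (p.2.1 : ℝ → ℝ) (t - p.1)|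
          (|∫ t in (0:ℝ)..x, (p.2.1 : ℝ → ℝ) (t - p.1)| ^ 2))
        ∂((volume : Measure ℝ).prod ν)) ≠ ⊤)
    (hmom2 : Integrable
      (fun p : ℝ × WW => (∫ t in (0:ℝ)..1, (p.2.1 : ℝ → ℝ) (t - p.1)) ^ 2)
      ((volume : Measure ℝ).prod ν))
    (x θ : ℝ) (hx : 0 < x) :
    Tendsto (fun lam : ℝ =>
        ∫ p : ℝ × WW,
          Psi (θ * lam ^ (-(H - γ / 2)) *
            ∫ t in (0:ℝ)..(lam * x), (p.2.1 : ℝ → ℝ) (t - p.1))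
          ∂((volume : Measure ℝ).prod ν))
      (nhdsWithin 0 (Set.Ioi 0))
      (nhds (((-(θ ^ 2 / 2) *
        (∫ p : ℝ × WW, (∫ t in (0:ℝ)..1, (p.2.1 : ℝ → ℝ) (t - p.1)) ^ 2
          ∂((volume : Measure ℝ).prod ν)) * x ^ (2 * (H - γ / 2)) : ℝ) : ℂ))) :=
  stmt_15_general γ H hγ ν hscal hmom2 x θ hx
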